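/- arXiv:1702.02616 — 3 statements merged into one kernel-verified Lean document; each statement's English description precedes it below -/
import Mathlib

section
/- For natural numbers r and s with s > 0, the indicator w_r(s) (which is 1 if s divides r and 0 otherwise) satisfies w_r(s) = ∏_{d ∣ s, d ≠ s} (gcd(r,s) - d)/(s - d), where the product is over proper divisors d of s and is taken in the rationals. -/
/-- `w r s` is `1` if `s ∣ r` and `0` otherwise. -/
def w (r s : ℕ) : ℕ := if s ∣ r then 1 else 0

theorem w_eq_prod_over_proper_divisors (r s : ℕ) (hs : 0 < s) :
    (w r s : ℚ) =
      ∏ d ∈ s.divisors.erase s, ((Nat.gcd r s : ℚ) - (d : ℚ)) / ((s : ℚ) - (d : ℚ)) := by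
  by_cases h : s ∣ r
  · have hg : Nat.gcd r s = s := Nat.gcd_eq_right h
    rw [w, if_pos h, hg]
    symm
    apply Finset.prod_eq_one
    intro d hd
    have hds : d ≠ s := Finset.ne_of_mem_erase hd
    have hdvd : d ∣ s := Nat.dvd_of_mem_divisors (Finset.mem_of_mem_erase hd)
    have hlt : d < s := lt_of_le_of_ne (Nat.le_of_dvd hs hdvd) hds
    have : (s : ℚ) - d ≠ 0 := by
      have : (d : ℚ) < s := by exact_mod_cast hlt
      linarith
    field_simp
  · have hg : Nat.gcd r s ∈ s.divisors.erase s := by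
      refine Finset.mem_erase.mpr ⟨?_, Nat.mem_divisors.mpr ⟨Nat.gcd_dvd_right r s, hs.ne'⟩⟩
      intro heq
      exact h (heq ▸ Nat.gcd_dvd_left r s)
    rw [w, if_neg h]
    symm
    push_cast
    apply Finset.prod_eq_zero hg
    simp
end

section
/- Let p and q be distinct primes and let H be a subgroup of order q in G = GL(2, 𝔽_p). Then the index [N_G(H) : C_G(H)] divides 2. -/
/-!
Let `u` generate `H` and let `g ∈ N(H)` conjugate `u` to `u ^ k`. Then `u ^ k` has the same trace
`s` and determinant `d` as `u`, so in the commutative algebra `𝔽_p[u]` both `u` and `u ^ k` are roots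
of `X ^ 2 - s X + d`. Hence `u ^ k - u` and `u ^ k - u'`, where `u' = s - u = d u⁻¹` is the other
root, have product zero; both divide `u ^ (k * k) - u`, whose square therefore vanishes. Since
`q ≠ p`, the polynomial `X ^ q - 1` is squarefree and `𝔽_p[u]` is reduced, so `u ^ (k * k) = u`,
i.e. `k ^ 2 ≡ 1 [MOD q]` and `g` acts on `H` trivially or by inversion. The image of
`N(H) → Aut(H)`, whose kernel is `C(H)`, thus lies in the group of order two generated by inversion.
-/

open Polynomial Subgroup

theorem isNilpotent_pow_mul_self_sub_self {T : Type*} [CommRing T] {m s d : T} {k : ℕ}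
    (hd : IsUnit d) (hm : m ^ 2 - s * m + d = 0) (hmk : (m ^ k) ^ 2 - s * m ^ k + d = 0)
    (hdk : d ^ k = d) : IsNilpotent (m ^ (k * k) - m) := by
  set n := m ^ k
  set m' := s - m
  have hmm' : m * m' = d := by linear_combination -hm
  have hroots : (n - m) * (n - m') = 0 := by linear_combination hmk - hm
  have hdvd₁ : n - m ∣ n ^ k - m := by
    rw [show n ^ k - m = (n ^ k - m ^ k) + (n - m) by ring]
    exact dvd_add (sub_dvd_pow_sub_pow n m k) dvd_rfl
  have hdvd₂ : n - m' ∣ n ^ k - m := by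
    have hnm' : n * m' ^ k = d := by rw [← mul_pow, hmm', hdk]
    have : n - m' ∣ m' * (m' ^ k - m) := ⟨-m' ^ k, by linear_combination hnm' - hmm'⟩
    rw [show n ^ k - m = (n ^ k - m' ^ k) + (m' ^ k - m) by ring]
    exact dvd_add (sub_dvd_pow_sub_pow n m' k)
      ((isUnit_of_mul_isUnit_right (hmm' ▸ hd)).dvd_mul_left.mp this)
  refine ⟨2, ?_⟩
  rw [pow_mul, sq]
  exact zero_dvd_iff.mp (hroots ▸ mul_dvd_mul hdvd₁ hdvd₂)

theorem Algebra.isReduced_adjoin_singleton_of_squarefree {K A : Type*} [Field K] [Ring A]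
    [Algebra K A] {a : A} {p : K[X]} (hp : Squarefree p) (hpa : aeval a p = 0) :
    IsReduced (Algebra.adjoin K {a}) := by
  refine ⟨fun x ⟨j, hj⟩ => Subtype.ext ?_⟩
  obtain ⟨r, hr⟩ : ∃ r : K[X], aeval a r = x := by
    rw [← AlgHom.mem_range, ← adjoin_singleton_eq_range_aeval]
    exact x.2
  have hmin : minpoly K a ∣ r ^ j :=
    minpoly.dvd K a (by rw [map_pow, hr]; exact congrArg Subtype.val hj)
  rw [← hr]
  exact aeval_eq_zero_of_dvd_aeval_eq_zero
    ((hp.squarefree_of_dvd (minpoly.dvd K a hpa)).isRadical j r hmin) (minpoly.aeval K a)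

theorem Matrix.fin_two_sq_sub_trace_mul_add_det_eq_zero {R : Type*} [CommRing R] [Nontrivial R]
    {S : Subalgebra R (Matrix (Fin 2) (Fin 2) R)} (x : S) :
    x ^ 2 - algebraMap R S (x : Matrix (Fin 2) (Fin 2) R).trace * x
      + algebraMap R S (x : Matrix (Fin 2) (Fin 2) R).det = 0 := by
  have := aeval_self_charpoly (x : Matrix (Fin 2) (Fin 2) R)
  rw [charpoly_fin_two] at this
  apply Subtype.ext
  simpa using this

theorem Matrix.GeneralLinearGroup.pow_mul_self_eq_self_of_conj_eq_pow {K : Type*} [Field K]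
    {n : ℕ} (hn : (n : K) ≠ 0) {u g : GL (Fin 2) K} (hu : u ^ n = 1) {k : ℕ}
    (h : g * u * g⁻¹ = u ^ k) : u ^ (k * k) = u := by
  set M : Matrix (Fin 2) (Fin 2) K := ↑u
  have hMk : M ^ k = g * M * ((g⁻¹ : GL (Fin 2) K) : Matrix (Fin 2) (Fin 2) K) := by
    rw [← Units.val_pow_eq_pow_val, ← h]
    rfl
  have : IsReduced (Algebra.adjoin K {M}) := by
    refine Algebra.isReduced_adjoin_singleton_of_squarefree
      (separable_X_pow_sub_C 1 hn one_ne_zero).squarefree ?_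
    rw [map_sub, map_pow, aeval_X, aeval_C, map_one, ← Units.val_pow_eq_pow_val, hu,
      Units.val_one, sub_self]
  let m : Algebra.adjoin K {M} := ⟨M, Algebra.self_mem_adjoin_singleton K M⟩
  have hmk : (m ^ k) ^ 2 - algebraMap K _ M.trace * m ^ k + algebraMap K _ M.det = 0 := by
    have := Matrix.fin_two_sq_sub_trace_mul_add_det_eq_zero (m ^ k)
    rwa [SubmonoidClass.coe_pow, show (m : Matrix (Fin 2) (Fin 2) K) = M from rfl, hMk,
      Matrix.trace_units_conj, Matrix.det_units_conj] at this
  have hdk : M.det ^ k = M.det := by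
    rw [← Matrix.det_pow, hMk, Matrix.det_units_conj]
  have hnil := isNilpotent_pow_mul_self_sub_self ((Matrix.isUnits_det_units u).map _)
    (Matrix.fin_two_sq_sub_trace_mul_add_det_eq_zero m) hmk (by rw [← map_pow, hdk])
  have hM : M ^ (k * k) = M := by
    simpa using congrArg Subtype.val (sub_eq_zero.mp (IsReduced.eq_zero _ hnil))
  exact Units.ext (by rw [Units.val_pow_eq_pow_val, hM])

open scoped IsMulCommutative in
theorem Subgroup.relIndex_centralizer_normalizer_dvd_two {G : Type*} [Group G] (H : Subgroup G)
    [IsMulCommutative H]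
    (h : ∀ g ∈ normalizer (H : Set G),
      (∀ x ∈ H, g * x * g⁻¹ = x) ∨ ∀ x ∈ H, g * x * g⁻¹ = x⁻¹) :
    (centralizer (H : Set G)).relIndex (normalizer (H : Set G)) ∣ 2 := by
  rw [relIndex, ← normalizerMonoidHom_ker, index_ker]
  refine (card_dvd_of_le (K := zpowers (MulEquiv.inv H)) ?_).trans ?_
  · rintro _ ⟨g, rfl⟩
    rcases h g g.2 with hg | hg
    · convert (zpowers _).one_mem
      ext x
      exact hg x x.2
    · convert mem_zpowers _
      ext x
      exact hg x x.2
  · rw [Nat.card_zpowers]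
    exact orderOf_dvd_of_pow_eq_one (by ext; simp [pow_two])

theorem Subgroup.relIndex_centralizer_normalizer_zpowers_dvd_two {G : Type*} [Group G] (u : G)
    (h : ∀ g ∈ normalizer (zpowers u : Set G), g * u * g⁻¹ = u ∨ g * u * g⁻¹ = u⁻¹) :
    (centralizer (zpowers u : Set G)).relIndex (normalizer (zpowers u : Set G)) ∣ 2 := by
  refine relIndex_centralizer_normalizer_dvd_two _ fun g hg => ?_
  rcases h g hg with hu | hu
  · left
    rintro _ ⟨j, rfl⟩
    rw [← conj_zpow, hu]
  · right
    rintro _ ⟨j, rfl⟩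
    rw [← conj_zpow, hu, inv_zpow]

theorem pow_eq_self_or_eq_inv_of_pow_mul_self_eq {G : Type*} [Group G] {u : G}
    (hu : (orderOf u).Prime) {k : ℕ} (h : u ^ (k * k) = u) : u ^ k = u ∨ u ^ k = u⁻¹ := by
  have := Fact.mk hu
  have hk : (k : ZMod (orderOf u)) * k = 1 := by
    exact_mod_cast (ZMod.natCast_eq_natCast_iff _ _ _).mpr
      (pow_eq_pow_iff_modEq.mp (h.trans (pow_one u).symm))
  rcases mul_self_eq_one_iff.mp hk with hk₁ | hk₁
  · left
    simpa using pow_eq_pow_iff_modEq.mpr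
      ((ZMod.natCast_eq_natCast_iff k 1 _).mp (by simpa using hk₁))
  · right
    rw [← zpow_neg_one, ← zpow_natCast]
    exact zpow_eq_zpow_iff_modEq.mpr
      ((ZMod.intCast_eq_intCast_iff _ _ _).mp (by simpa using hk₁))

theorem normalizer_over_centralizer_dvd_two (p q : ℕ) (hp : p.Prime) (hq : q.Prime)
    (hne : p ≠ q) (H : Subgroup (GL (Fin 2) (ZMod p))) (hH : Nat.card H = q) :
    (Subgroup.centralizer (H : Set (GL (Fin 2) (ZMod p)))).relIndex (Subgroup.normalizer (H : Set (GL (Fin 2) (ZMod p)))) ∣ 2 := by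
  have := Fact.mk hp
  have := Fact.mk hq
  obtain ⟨u, rfl⟩ := H.isCyclic_iff_exists_zpowers_eq_top.mp (isCyclic_of_prime_card hH)
  have hu : orderOf u = q := Nat.card_zpowers u ▸ hH
  have hq₀ : (q : ZMod p) ≠ 0 := by
    rw [Ne, ZMod.natCast_eq_zero_iff, Nat.prime_dvd_prime_iff_eq hp hq]
    exact hne
  refine relIndex_centralizer_normalizer_zpowers_dvd_two u fun g hg => ?_
  obtain ⟨k, hk⟩ : g * u * g⁻¹ ∈ Submonoid.powers u :=
    mem_powers_iff_mem_zpowers.mpr ((mem_normalizer_iff.mp hg u).mp (mem_zpowers u))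
  rw [← hk]
  exact pow_eq_self_or_eq_inv_of_pow_mul_self_eq (hu ▸ hq)
    (Matrix.GeneralLinearGroup.pow_mul_self_eq_self_of_conj_eq_pow hq₀
      (hu ▸ pow_orderOf_eq_one u) hk.symm)
end

section
/- Let p < q be primes with (p, q) ≠ (2, 3). Then every group of order p^2·q^2 has a normal Sylow q-subgroup. -/
theorem normal_sylow_q_of_order_p_sq_q_sq (p q : ℕ) (hp : p.Prime) (hq : q.Prime)
    (hpq : p < q) (hne : ¬(p = 2 ∧ q = 3))
    (G : Type*) [Group G] [Finite G] (hG : Nat.card G = p ^ 2 * q ^ 2) :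
    ∃ H : Subgroup G, H.Normal ∧ Nat.card H = q ^ 2 := by
  haveI : Fact q.Prime := ⟨hq⟩
  have hp2 := hp.two_le
  have hq2 := hq.two_le
  have hpq' : p ≠ q := hpq.ne
  obtain ⟨P⟩ : Nonempty (Sylow q G) := inferInstance
  have hfact : (Nat.card G).factorization q = 2 := by
    rw [hG, Nat.factorization_mul (pow_ne_zero 2 hp.pos.ne') (pow_ne_zero 2 hq.pos.ne'),
      hp.factorization_pow, hq.factorization_pow]
    simp [Finsupp.single_apply, hpq']
  have hcardP : Nat.card P = q ^ 2 := by
    rw [Sylow.card_eq_multiplicity, hfact]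
  have hindex : (P : Subgroup G).index = p ^ 2 := by
    have h1 : Nat.card P * (P : Subgroup G).index = Nat.card G :=
      Subgroup.card_mul_index _
    rw [hcardP, hG] at h1
    exact Nat.eq_of_mul_eq_mul_left (pow_pos hq.pos 2) (by rw [h1]; ring)
  have hmod : Nat.card (Sylow q G) ≡ 1 [MOD q] := card_sylow_modEq_one q G
  have hdvd : Nat.card (Sylow q G) ∣ p ^ 2 := hindex ▸ P.card_dvd_index
  obtain ⟨k, hk, hn⟩ := (Nat.dvd_prime_pow hp).mp hdvd
  have hq_dvd_sub : ∀ n : ℕ, 0 < n → n ≡ 1 [MOD q] → q ∣ n - 1 := by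
    intro n hn hmod
    exact (Nat.modEq_iff_dvd' hn).mp hmod.symm
  have hone : Nat.card (Sylow q G) = 1 := by
    interval_cases k
    · simpa using hn
    · exfalso
      rw [hn] at hmod
      have h1 : q ∣ p - 1 := hq_dvd_sub p hp.pos (by simpa using hmod)
      have := Nat.le_of_dvd (by omega) h1
      omega
    · exfalso
      rw [hn] at hmod
      have h1 : q ∣ p ^ 2 - 1 := hq_dvd_sub _ (pow_pos hp.pos 2) hmod
      have h2 : p ^ 2 - 1 = (p - 1) * (p + 1) := by
        have := Nat.sq_sub_sq p 1
        simpa [mul_comm] using this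
      rw [h2] at h1
      rcases hq.dvd_mul.mp h1 with h | h
      · have := Nat.le_of_dvd (by omega) h
        omega
      · have := Nat.le_of_dvd (by omega) h
        have hqe : q = p + 1 := by omega
        rcases hp.eq_two_or_odd' with h2' | hodd
        · exact hne ⟨h2', by omega⟩
        · have hev : Even q := by rw [hqe]; exact Odd.add_one hodd
          rcases hq.eq_two_or_odd' with h' | h'
          · omega
          · exact (Nat.not_even_iff_odd.mpr h') hev
  have hnorm : (P : Subgroup G).Normal := by
    have h := P.card_eq_index_normalizer
    rw [hone] at h
    rw [← Subgroup.normalizer_eq_top_iff]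
    exact Subgroup.index_eq_one.mp h.symm
  exact ⟨P, hnorm, hcardP⟩
end
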